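/- arXiv:2504.10998 — 3 statements merged into one kernel-verified Lean document; each statement's English description precedes it below -/
import Mathlib

section
/- Let a > 0 and let α : ℝ → ℝ be a smooth nonnegative function. Then every nonzero maximal solution x : I → ℝ of the ODE x'(t) = a·x(t)² + α(t) has maximal interval of existence I strictly contained in ℝ (i.e., the solution is incomplete). -/
lemma blowup (a : ℝ) (ha : 0 < a) (u f : ℝ → ℝ)
    (hu : ∀ t, HasDerivAt u (f t) t) (hf : ∀ t, a * (u t) ^ 2 ≤ f t)
    (t₀ : ℝ) (h0 : 0 < u t₀) : False := by
  have hdiff : Differentiable ℝ u := fun t => (hu t).differentiableAt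
  have hmono : Monotone u := by
    apply monotone_of_deriv_nonneg hdiff
    intro t
    rw [(hu t).deriv]
    have := hf t
    nlinarith [sq_nonneg (u t)]
  have hpos : ∀ t, t₀ ≤ t → 0 < u t := fun t ht => lt_of_lt_of_le h0 (hmono ht)
  set w : ℝ → ℝ := fun t => (u t)⁻¹ + a * t with hw_def
  have hw : ∀ t, t₀ ≤ t → HasDerivAt w (-(f t) / (u t) ^ 2 + a) t := by
    intro t ht
    have h1 : HasDerivAt (fun s => a * s) a t := by
      simpa using (hasDerivAt_id t).const_mul a
    exact ((hu t).inv (hpos t ht).ne').add h1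
  have anti : AntitoneOn w (Set.Ici t₀) := by
    apply antitoneOn_of_deriv_nonpos (convex_Ici t₀)
    · exact fun t ht => ((hw t ht).differentiableAt).continuousAt.continuousWithinAt
    · intro t ht
      rw [interior_Ici] at ht
      exact ((hw t (le_of_lt ht)).differentiableAt).differentiableWithinAt
    · intro t ht
      rw [interior_Ici] at ht
      rw [(hw t (le_of_lt ht)).deriv]
      have h1 := hf t
      have h2 := hpos t (le_of_lt ht)
      have h3 : (0:ℝ) < (u t) ^ 2 := by positivity
      rw [neg_div, add_comm, ← sub_eq_add_neg, sub_nonpos, le_div_iff₀ h3]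
      nlinarith
  have hd : 0 < ((u t₀)⁻¹ + 1) / a := by positivity
  set t₁ := t₀ + ((u t₀)⁻¹ + 1) / a with ht₁
  have hle : t₀ ≤ t₁ := by rw [ht₁]; linarith
  have hw01 := anti (Set.self_mem_Ici) (Set.mem_Ici.2 hle) hle
  have hinv1 : 0 < (u t₁)⁻¹ := inv_pos.2 (hpos t₁ hle)
  have key : a * (t₁ - t₀) = (u t₀)⁻¹ + 1 := by
    rw [ht₁]; field_simp; ring
  simp only [hw_def] at hw01
  nlinarith

/-- For `a > 0` and `α` smooth and nonnegative, every nonzero maximal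
solution of `x' = a x² + α(t)` is incomplete; equivalently, there is no nonzero
solution defined on all of `ℝ`. -/
theorem stmt_0 (a : ℝ) (ha : 0 < a) (α : ℝ → ℝ) (hα : ContDiff ℝ (⊤ : ℕ∞) α)
    (hαnn : ∀ t, 0 ≤ α t) (x : ℝ → ℝ)
    (hx : ∀ t, HasDerivAt x (a * (x t) ^ 2 + α t) t) (hnz : x ≠ 0) : False := by
  obtain ⟨t₀, ht₀⟩ : ∃ t, x t ≠ 0 := by
    by_contra h
    push_neg at h
    exact hnz (funext h)
  rcases lt_or_gt_of_ne ht₀ with hneg | hpos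
  · -- x t₀ < 0 : use u t = -x (-t)
    apply blowup a ha (fun t => -x (-t)) (fun t => a * (x (-t)) ^ 2 + α (-t))
      ?_ ?_ (-t₀) (by simpa using neg_pos.2 hneg)
    · intro t
      have h1 : HasDerivAt (fun t : ℝ => x (-t)) ((a * (x (-t)) ^ 2 + α (-t)) * (-1)) t :=
        (hx (-t)).comp t (hasDerivAt_neg t)
      have h2 := h1.neg
      rw [show (a * x (-t) ^ 2 + α (-t)) * (-1) = -(a * x (-t) ^ 2 + α (-t)) by ring, neg_neg] at h2
      exact h2
    · intro t
      have := hαnn (-t)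
      show a * (-x (-t)) ^ 2 ≤ a * x (-t) ^ 2 + α (-t)
      nlinarith
  · apply blowup a ha x (fun t => a * (x t) ^ 2 + α t) hx ?_ t₀ hpos
    intro t
    have := hαnn t
    show a * x t ^ 2 ≤ a * x t ^ 2 + α t
    linarith
end

section
/- For the Lie algebra h(λ) with basis (e₁,e₂,e₃) and brackets [e₁,e₂]=e₂, [e₁,e₃]=λe₃, [e₂,e₃]=0, where 0 < |λ| < 1, a linear map φ of ℝ³ is a Lie algebra automorphism if and only if its matrix in the basis (e₁,e₂,e₃) has the form [[1,0,0],[a,c,0],[b,0,d]] with c,d ≠ 0. -/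
/-- The Lie bracket of `h(λ)`: `[e₁,e₂] = e₂`, `[e₁,e₃] = λ e₃`, `[e₂,e₃] = 0`. -/
def hBracket (l : ℝ) (u v : Fin 3 → ℝ) : Fin 3 → ℝ :=
  ![0, u 0 * v 1 - u 1 * v 0, l * (u 0 * v 2 - u 2 * v 0)]

private lemma decomp (u : Fin 3 → ℝ) :
    u = u 0 • ![(1:ℝ),0,0] + u 1 • ![0,1,0] + u 2 • ![0,0,1] := by
  funext i; fin_cases i <;> simp

/-- For `0 < |λ| < 1`, a linear map `φ` of `ℝ³` is an automorphism of
`h(λ)` iff its matrix in the standard basis is `[[1,0,0],[a,c,0],[b,0,d]]`, `c, d ≠ 0`. -/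
theorem stmt_2 (l : ℝ) (h1 : 0 < |l|) (h2 : |l| < 1)
    (φ : (Fin 3 → ℝ) →ₗ[ℝ] (Fin 3 → ℝ)) :
    (Function.Bijective φ ∧ ∀ u v, φ (hBracket l u v) = hBracket l (φ u) (φ v)) ↔
    ∃ a b c d : ℝ, c ≠ 0 ∧ d ≠ 0 ∧
      φ ![1, 0, 0] = ![1, a, b] ∧ φ ![0, 1, 0] = ![0, c, 0] ∧ φ ![0, 0, 1] = ![0, 0, d] := by
  have hl : l ≠ 0 := by intro h; rw [h] at h1; simp at h1
  have hl1 : l ≠ 1 := by rintro rfl; simp at h2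
  have hlb := abs_lt.mp h2
  constructor
  · rintro ⟨⟨hinj, _⟩, hbr⟩
    set E1 := φ ![1,0,0] with hE1
    set E2 := φ ![0,1,0] with hE2
    set E3 := φ ![0,0,1] with hE3
    have h12 : E2 = hBracket l E1 E2 := by
      have h := hbr ![1,0,0] ![0,1,0]
      have hb : hBracket l ![(1:ℝ),0,0] ![0,1,0] = ![0,1,0] := by
        funext i; fin_cases i <;> simp [hBracket]
      rw [hb] at h; exact h
    have h13 : l • E3 = hBracket l E1 E3 := by
      have h := hbr ![1,0,0] ![0,0,1]
      have hb : hBracket l ![(1:ℝ),0,0] ![0,0,1] = l • ![0,0,1] := by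
        funext i; fin_cases i <;> simp [hBracket]
      rw [hb, map_smul] at h; exact h
    have hq : E2 0 = 0 := by simpa [hBracket] using congrFun h12 0
    have hs : E3 0 = 0 := by
      have h := congrFun h13 0
      simp [hBracket] at h
      rcases h with h | h
      · exact absurd h hl
      · exact h
    have hc : E2 1 = E1 0 * E2 1 - E1 1 * E2 0 := by
      simpa [hBracket] using congrFun h12 1
    have hr : E2 2 = l * (E1 0 * E2 2 - E1 2 * E2 0) := by
      simpa [hBracket] using congrFun h12 2
    have ht : l * E3 1 = E1 0 * E3 1 - E1 1 * E3 0 := by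
      simpa [hBracket] using congrFun h13 1
    have hd : l * E3 2 = l * (E1 0 * E3 2 - E1 2 * E3 0) := by
      simpa [hBracket] using congrFun h13 2
    rw [hq] at hc hr
    rw [hs] at ht hd
    -- now hc : E2 1 = E1 0 * E2 1 - E1 1 * 0, etc.
    have hcne : E2 1 ≠ 0 := by
      intro hc0
      have hrne : E2 2 ≠ 0 := by
        intro hr0
        have hz : φ ![0,1,0] = φ 0 := by
          rw [map_zero]
          funext i; fin_cases i
          · exact hq
          · exact hc0
          · exact hr0
        have h0 := hinj hz
        simpa using congrFun h0 1
      have hlp : l * E1 0 = 1 := by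
        have h' : (1 - l * E1 0) * E2 2 = 0 := by linear_combination hr
        rcases mul_eq_zero.mp h' with h | h
        · linarith
        · exact absurd h hrne
      have htz : (l - E1 0) * E3 1 = 0 := by linear_combination ht
      rcases mul_eq_zero.mp htz with h | ht0
      · -- E1 0 = l, so l * l = 1, contradicting |l| < 1
        have : l * l = 1 := by
          have : E1 0 = l := by linarith
          rw [this] at hlp; linarith
        nlinarith [hlb.1, hlb.2]
      · -- E3 1 = 0 : then d•e₂ - r•e₃ is in kernel
        have hv : φ (E3 2 • ![0,1,0] - E2 2 • ![0,0,1]) = φ 0 := by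
          rw [map_zero, map_sub, map_smul, map_smul, ← hE2, ← hE3]
          funext i; fin_cases i <;>
            simp [hq, hs, hc0, ht0] <;> ring
        have h0 := hinj hv
        have := congrFun h0 2
        simp at this
        exact hrne this
    have hp : E1 0 = 1 := by
      have h' : (E1 0 - 1) * E2 1 = 0 := by linear_combination -hc
      rcases mul_eq_zero.mp h' with h | h
      · linarith
      · exact absurd h hcne
    rw [hp] at hr ht hd
    have hr0 : E2 2 = 0 := by
      have h' : (1 - l) * E2 2 = 0 := by linear_combination hr
      rcases mul_eq_zero.mp h' with h | h
      · exact absurd (by linarith : l = 1) hl1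
      · exact h
    have ht0 : E3 1 = 0 := by
      have h' : (l - 1) * E3 1 = 0 := by linear_combination ht
      rcases mul_eq_zero.mp h' with h | h
      · exact absurd (by linarith : l = 1) hl1
      · exact h
    have hdne : E3 2 ≠ 0 := by
      intro hd0
      have hz : φ ![0,0,1] = φ 0 := by
        rw [map_zero]
        funext i; fin_cases i
        · exact hs
        · exact ht0
        · exact hd0
      have h0 := hinj hz
      simpa using congrFun h0 2
    refine ⟨E1 1, E1 2, E2 1, E3 2, hcne, hdne, ?_, ?_, ?_⟩
    · funext i; fin_cases i
      · exact hp
      · rfl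
      · rfl
    · funext i; fin_cases i
      · exact hq
      · rfl
      · exact hr0
    · funext i; fin_cases i
      · exact hs
      · exact ht0
      · rfl
  · rintro ⟨a, b, c, d, hc, hd, hφ1, hφ2, hφ3⟩
    have hφ : ∀ u : Fin 3 → ℝ, φ u = ![u 0, a * u 0 + c * u 1, b * u 0 + d * u 2] := by
      intro u
      conv_lhs => rw [decomp u]
      rw [map_add, map_add, map_smul, map_smul, map_smul, hφ1, hφ2, hφ3]
      funext i; fin_cases i <;> simp <;> ring
    have hinj : Function.Injective φ := by
      intro x y h
      rw [hφ x, hφ y] at h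
      have h0 := congrFun h 0
      have h1' := congrFun h 1
      have h2' := congrFun h 2
      simp at h0 h1' h2'
      funext i; fin_cases i
      · exact h0
      · have : c * x 1 = c * y 1 := by rw [h0] at h1'; linarith
        exact mul_left_cancel₀ hc this
      · have : d * x 2 = d * y 2 := by
          rw [h0] at h2'; linarith [h2']
        exact mul_left_cancel₀ hd this
    refine ⟨⟨hinj, (LinearMap.injective_iff_surjective).mp hinj⟩, ?_⟩
    intro u v
    rw [hφ (hBracket l u v), hφ u, hφ v]
    funext i; fin_cases i <;> simp [hBracket] <;> ring
end

section
/- Let 0 < λ < 1 and k, c ∈ ℝ. The set S = {(x,y,z) ∈ ℝ³ : z > 0, x² − z² + 2yz = k, (y−z)z^{−λ} = c} is bounded. -/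
/-!
On the level set, `y = z + c z^λ` and `x² = k - (z² + 2c z^λ z)`. Since `λ < 1`, the term
`z² + 2c z^λ z = z² (1 + 2c z^(λ-1))` tends to `+∞`, so `x² ≥ 0` confines `z` to a compact
interval `[0, Z]`; then `y` and `x²` range over continuous images of that interval.
-/

open Filter Topology Set

lemma Real.isBounded_setOf_sq_mem {s : Set ℝ} (hs : Bornology.IsBounded s) :
    Bornology.IsBounded {x : ℝ | x ^ 2 ∈ s} := by
  obtain ⟨M, hM⟩ := hs.bddAbove
  refine (Metric.isBounded_closedBall (x := 0) (r := √M)).subset fun x hx => ?_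
  rw [Metric.mem_closedBall, dist_zero_right, Real.norm_eq_abs]
  exact Real.abs_le_sqrt (hM hx)

lemma tendsto_sq_add_mul_rpow_mul_atTop {l : ℝ} (hl : l < 1) (a : ℝ) :
    Tendsto (fun z : ℝ => z ^ 2 + a * (z ^ l * z)) atTop atTop := by
  have hdecay : Tendsto (fun z : ℝ => 1 + a * z ^ (l - 1)) atTop (𝓝 1) := by
    have h := (tendsto_rpow_neg_atTop (y := 1 - l) (by linarith)).const_mul a
    simpa using h.const_add 1
  refine ((tendsto_pow_atTop two_ne_zero).atTop_mul_pos one_pos hdecay).congr' ?_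
  filter_upwards [eventually_gt_atTop 0] with z hz
  rw [Real.rpow_sub_one hz.ne']
  field_simp

/-- For `0 < λ < 1` and `k, c ∈ ℝ`, the set
`{(x,y,z) : z > 0, x² − z² + 2yz = k, (y−z)z^{−λ} = c}` is bounded. -/
theorem stmt_12 (l k c : ℝ) (h1 : 0 < l) (h2 : l < 1) :
    Bornology.IsBounded {p : ℝ × ℝ × ℝ | 0 < p.2.2 ∧
      p.1 ^ 2 - p.2.2 ^ 2 + 2 * p.2.1 * p.2.2 = k ∧
      (p.2.1 - p.2.2) * p.2.2 ^ (-l : ℝ) = c} := by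
  obtain ⟨Z, hZ⟩ :=
    ((tendsto_sq_add_mul_rpow_mul_atTop h2 (2 * c)).eventually_gt_atTop k).exists_forall_of_atTop
  have hpow : Continuous fun z : ℝ => z ^ l := Real.continuous_rpow_const h1.le
  have hxsq : Bornology.IsBounded ((fun z => k - (z ^ 2 + 2 * c * (z ^ l * z))) '' Icc 0 Z) :=
    (isCompact_Icc.image (by fun_prop)).isBounded
  have hy : Bornology.IsBounded ((fun z => z + c * z ^ l) '' Icc 0 Z) :=
    (isCompact_Icc.image (by fun_prop)).isBounded
  refine ((Real.isBounded_setOf_sq_mem hxsq).prod (hy.prod (Metric.isBounded_Icc 0 Z))).subset ?_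
  rintro ⟨x, y, z⟩ ⟨hz, he, hf⟩
  dsimp only at hz he hf
  have hyz : y = z + c * z ^ l := by
    rw [Real.rpow_neg hz.le, ← div_eq_mul_inv, div_eq_iff (by positivity)] at hf
    linarith
  have hx : x ^ 2 = k - (z ^ 2 + 2 * c * (z ^ l * z)) := by
    rw [hyz] at he
    linarith
  have hzZ : z ≤ Z := le_of_not_ge fun h => by linarith [hZ z h, sq_nonneg x]
  exact ⟨⟨z, ⟨hz.le, hzZ⟩, hx.symm⟩, ⟨z, ⟨hz.le, hzZ⟩, hyz.symm⟩, hz.le, hzZ⟩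
end
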